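/- Let k₁, k₂ be constants with k₂² > 2k₁ > 0, set λ₁ = √(k₂ + √(k₂² − 2k₁)), λ₂ = √(k₂ − √(k₂² − 2k₁)), and define s₀(t) = (λ₁² + λ₂²)·sinh(λ₁t)·sinh(λ₂t) + 2λ₁λ₂(1 − cosh(λ₁t)·cosh(λ₂t)), s₁(t) = λ₁λ₂(λ₁² − λ₂²)(λ₁·sinh(λ₁t)·cosh(λ₂t) − λ₂·cosh(λ₁t)·sinh(λ₂t)), s₂(t) = λ₁λ₂((λ₁² + λ₂²)(cosh(λ₁t)·cosh(λ₂t) − 1) − 2λ₁λ₂·sinh(λ₁t)·sinh(λ₂t)). Let K = [[k₁ I, 0],[0, k₂ I]]. Then S(t) = ½·[[−(s₁(t)/s₀(t)) I, (s₂(t)/s₀(t)) I],[(s₂(t)/s₀(t)) I, −(s₀'(t)/s₀(t)) I]] solves the matrix Riccati equation S'(t) = S(t)C + Cᵀ S(t) + S(t) D S(t) − K on every interval of (0,∞) where s₀ does not vanish, and S(t)⁻¹ → 0 as t → 0⁺. -/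

import Mathlib

noncomputable section
open Real Set Matrix Filter

/-- The `2n × 2n` matrix `C = [[0, −I], [0, 0]]` in `n × n` block form. -/
def Cmat (n : ℕ) : Matrix (Fin n ⊕ Fin n) (Fin n ⊕ Fin n) ℝ :=
  Matrix.fromBlocks 0 (-1) 0 0

/-- The `2n × 2n` matrix `D = [[0, 0], [0, 2I]]` in `n × n` block form. -/
def Dmat (n : ℕ) : Matrix (Fin n ⊕ Fin n) (Fin n ⊕ Fin n) ℝ :=
  Matrix.fromBlocks 0 0 0 ((2 : ℝ) • 1)

/-- The block-diagonal matrix `[[a·I, 0], [0, b·I]]`. -/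
def blockDiag (n : ℕ) (a b : ℝ) : Matrix (Fin n ⊕ Fin n) (Fin n ⊕ Fin n) ℝ :=
  Matrix.fromBlocks (a • 1) 0 0 (b • 1)

/-- The matrix `½·[[-(s₁/s₀)I, (s₂/s₀)I], [(s₂/s₀)I, -(s₀'/s₀)I]]`. -/
def harnackMatrix (n : ℕ) (s₀ s₁ s₂ : ℝ → ℝ) (t : ℝ) :
    Matrix (Fin n ⊕ Fin n) (Fin n ⊕ Fin n) ℝ :=
  (1/2 : ℝ) • Matrix.fromBlocks (-(s₁ t / s₀ t) • 1) ((s₂ t / s₀ t) • 1)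
    ((s₂ t / s₀ t) • 1) (-(deriv s₀ t / s₀ t) • 1)

/-- `λ₁ = √(k₂ + √(k₂² − 2k₁))`. -/
def lam1 (k₁ k₂ : ℝ) : ℝ := Real.sqrt (k₂ + Real.sqrt (k₂ ^ 2 - 2 * k₁))

/-- `λ₂ = √(k₂ − √(k₂² − 2k₁))`. -/
def lam2 (k₁ k₂ : ℝ) : ℝ := Real.sqrt (k₂ - Real.sqrt (k₂ ^ 2 - 2 * k₁))

/-- `s₀` in the case `k₂² > 2k₁ > 0`. -/
def s0A (k₁ k₂ t : ℝ) : ℝ :=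
  ((lam1 k₁ k₂) ^ 2 + (lam2 k₁ k₂) ^ 2) * Real.sinh (lam1 k₁ k₂ * t) * Real.sinh (lam2 k₁ k₂ * t)
    + 2 * lam1 k₁ k₂ * lam2 k₁ k₂ * (1 - Real.cosh (lam1 k₁ k₂ * t) * Real.cosh (lam2 k₁ k₂ * t))

/-- `s₁` in the case `k₂² > 2k₁ > 0`. -/
def s1A (k₁ k₂ t : ℝ) : ℝ :=
  lam1 k₁ k₂ * lam2 k₁ k₂ * ((lam1 k₁ k₂) ^ 2 - (lam2 k₁ k₂) ^ 2) *
    (lam1 k₁ k₂ * Real.sinh (lam1 k₁ k₂ * t) * Real.cosh (lam2 k₁ k₂ * t)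
      - lam2 k₁ k₂ * Real.cosh (lam1 k₁ k₂ * t) * Real.sinh (lam2 k₁ k₂ * t))

/-- `s₂` in the case `k₂² > 2k₁ > 0`. -/
def s2A (k₁ k₂ t : ℝ) : ℝ :=
  lam1 k₁ k₂ * lam2 k₁ k₂ *
    (((lam1 k₁ k₂) ^ 2 + (lam2 k₁ k₂) ^ 2) *
        (Real.cosh (lam1 k₁ k₂ * t) * Real.cosh (lam2 k₁ k₂ * t) - 1)
      - 2 * lam1 k₁ k₂ * lam2 k₁ k₂ * Real.sinh (lam1 k₁ k₂ * t) * Real.sinh (lam2 k₁ k₂ * t))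

/-!
Write `P = s₁/s₀`, `Q = s₂/s₀`, `R = s₀'/s₀`. Then `S = ½[[-P, Q], [Q, -R]] ⊗ I`, and `C`, `D`, `K`
are `2 × 2` matrices tensored with `I` as well, so the Riccati equation reduces to the scalar system
`P' = 2k₁ - Q²`, `Q' = P - QR`, `R' = 2Q - R² + 2k₂`. This follows from `s₂' = s₁`,
`s₀'' = 2s₂ + 2k₂s₀` and `s₁'s₀ - s₁s₀' = 2k₁s₀² - s₂²`, using `λ₁² + λ₂² = 2k₂`, `λ₁²λ₂² = 2k₁`.

Near `0`, with `c = λ₁λ₂(λ₁² - λ₂²)²`, l'Hôpital gives `s₁ ~ ct`, `s₂ ~ ct²/2`, `s₀' ~ ct³/3` and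
`s₀ ~ ct⁴/12`, hence `P ~ 12/t³`, `Q ~ 6/t²`, `R ~ 4/t`, and the entries of
`S⁻¹ = -2/(PR - Q²) · [[R, Q], [Q, P]] ⊗ I` are `O(t)`. If `c = 0` (e.g. `k₂ ≤ 0`, where
`λ₂ = 0`), then `s₀` vanishes identically: the first claim is vacuous and `S = 0` by the convention
`x / 0 = 0`.
-/

open Topology

section BlockScalar

variable (m : Type*) [Fintype m] [DecidableEq m] {R : Type*} [CommRing R]

def blockScalar : Matrix (Fin 2) (Fin 2) R →+* Matrix (m ⊕ m) (m ⊕ m) R where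
  toFun M := fromBlocks (M 0 0 • 1) (M 0 1 • 1) (M 1 0 • 1) (M 1 1 • 1)
  map_one' := by simp [fromBlocks_one]
  map_mul' M N := by
    simp only [fromBlocks_multiply, Matrix.mul_apply, Fin.sum_univ_two, smul_mul_smul_comm,
      mul_one, add_smul]
  map_zero' := by simp [fromBlocks_zero]
  map_add' M N := by simp only [Matrix.add_apply, add_smul, fromBlocks_add]

variable {m}

lemma blockScalar_apply (M : Matrix (Fin 2) (Fin 2) R) (i j : m ⊕ m) :
    blockScalar m M i j
      = M (Sum.elim (fun _ => 0) (fun _ => 1) i) (Sum.elim (fun _ => 0) (fun _ => 1) j)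
        * (1 : Matrix m m R) (Sum.elim id id i) (Sum.elim id id j) := by
  rcases i with i | i <;> rcases j with j | j <;> rfl

lemma blockScalar_transpose (M : Matrix (Fin 2) (Fin 2) R) :
    (blockScalar m M)ᵀ = blockScalar m Mᵀ := by
  simp [blockScalar, fromBlocks_transpose]

lemma blockScalar_inv {M : Matrix (Fin 2) (Fin 2) R} (hM : IsUnit M.det) :
    (blockScalar m M)⁻¹ = blockScalar m M⁻¹ :=
  inv_eq_right_inv (by rw [← map_mul, mul_nonsing_inv M hM, map_one])

lemma hasDerivAt_blockScalar_apply {M : ℝ → Matrix (Fin 2) (Fin 2) ℝ}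
    {M' : Matrix (Fin 2) (Fin 2) ℝ} {t : ℝ} (hM : ∀ x y, HasDerivAt (fun τ => M τ x y) (M' x y) t)
    (i j : m ⊕ m) : HasDerivAt (fun τ => blockScalar m (M τ) i j) (blockScalar m M' i j) t := by
  simp only [blockScalar_apply]
  exact (hM _ _).mul_const _

lemma tendsto_blockScalar_apply {α : Type*} {l : Filter α} {M : α → Matrix (Fin 2) (Fin 2) ℝ}
    (hM : ∀ x y, Tendsto (fun τ => M τ x y) l (𝓝 0)) (i j : m ⊕ m) :
    Tendsto (fun τ => blockScalar m (M τ) i j) l (𝓝 0) := by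
  simp only [blockScalar_apply]
  simpa using (hM _ _).mul_const _

end BlockScalar

lemma Cmat_eq_blockScalar (n : ℕ) : Cmat n = blockScalar (Fin n) !![0, -1; 0, 0] := by
  simp [Cmat, blockScalar]

lemma Dmat_eq_blockScalar (n : ℕ) : Dmat n = blockScalar (Fin n) !![0, 0; 0, 2] := by
  simp [Dmat, blockScalar]

lemma blockDiag_eq_blockScalar (n : ℕ) (a b : ℝ) :
    blockDiag n a b = blockScalar (Fin n) !![a, 0; 0, b] := by
  simp [_root_.blockDiag, blockScalar]

def riccatiBlock (p q r : ℝ) : Matrix (Fin 2) (Fin 2) ℝ := (1 / 2 : ℝ) • !![-p, q; q, -r]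

lemma harnackMatrix_eq_blockScalar (n : ℕ) (s₀ s₁ s₂ : ℝ → ℝ) (t : ℝ) :
    harnackMatrix n s₀ s₁ s₂ t
      = blockScalar (Fin n) (riccatiBlock (s₁ t / s₀ t) (s₂ t / s₀ t) (deriv s₀ t / s₀ t)) := by
  simp [harnackMatrix, riccatiBlock, blockScalar, smul_smul, fromBlocks_smul]

lemma riccatiBlock_riccati (p q r k₁ k₂ : ℝ) :
    riccatiBlock p q r * !![0, -1; 0, 0] + !![0, -1; 0, 0]ᵀ * riccatiBlock p q r
        + riccatiBlock p q r * !![0, 0; 0, 2] * riccatiBlock p q r - !![k₁, 0; 0, k₂]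
      = riccatiBlock (2 * k₁ - q ^ 2) (p - q * r) (2 * q - r ^ 2 + 2 * k₂) := by
  ext i j
  fin_cases i <;> fin_cases j <;> simp [riccatiBlock, Matrix.mul_apply, Fin.sum_univ_two] <;> ring

lemma det_riccatiBlock (p q r : ℝ) : (riccatiBlock p q r).det = (p * r - q ^ 2) / 4 := by
  rw [riccatiBlock, det_smul, Fintype.card_fin, det_fin_two_of]; ring

lemma riccatiBlock_inv (p q r : ℝ) :
    (riccatiBlock p q r)⁻¹ = (-2 / (p * r - q ^ 2)) • !![r, q; q, p] := by
  by_cases h : p * r - q ^ 2 = 0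
  · rw [nonsing_inv_apply_not_isUnit _ (by simp [det_riccatiBlock, h]), h, div_zero, zero_smul]
  · refine inv_eq_right_inv ?_
    ext i j
    fin_cases i <;> fin_cases j <;> simp [riccatiBlock, Matrix.mul_apply, Fin.sum_univ_two] <;>
      field_simp <;> ring

lemma hasDerivAt_riccatiBlock_apply {p q r : ℝ → ℝ} {p' q' r' t : ℝ} (hp : HasDerivAt p p' t)
    (hq : HasDerivAt q q' t) (hr : HasDerivAt r r' t) (x y : Fin 2) :
    HasDerivAt (fun τ => riccatiBlock (p τ) (q τ) (r τ) x y) (riccatiBlock p' q' r' x y) t := by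
  fin_cases x <;> fin_cases y
  exacts [hp.neg.const_mul _, hq.const_mul _, hq.const_mul _, hr.neg.const_mul _]

theorem hasDerivAt_harnackMatrix_apply {n : ℕ} {s₀ s₁ s₂ d₀ : ℝ → ℝ} {d₁ k₁ k₂ t : ℝ}
    (hs₀ : ∀ τ, HasDerivAt s₀ (d₀ τ) τ) (hd₀ : HasDerivAt d₀ (2 * s₂ t + 2 * k₂ * s₀ t) t)
    (hs₁ : HasDerivAt s₁ d₁ t) (hs₂ : HasDerivAt s₂ (s₁ t) t)
    (hW : d₁ * s₀ t - s₁ t * d₀ t = 2 * k₁ * s₀ t ^ 2 - s₂ t ^ 2) (ht : s₀ t ≠ 0)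
    (i j : Fin n ⊕ Fin n) :
    HasDerivAt (fun τ => harnackMatrix n s₀ s₁ s₂ τ i j)
      ((harnackMatrix n s₀ s₁ s₂ t * Cmat n + (Cmat n)ᵀ * harnackMatrix n s₀ s₁ s₂ t
        + harnackMatrix n s₀ s₁ s₂ t * Dmat n * harnackMatrix n s₀ s₁ s₂ t
        - blockDiag n k₁ k₂) i j) t := by
  have hd : deriv s₀ = d₀ := funext fun τ => (hs₀ τ).deriv
  simp only [harnackMatrix_eq_blockScalar, hd, Cmat_eq_blockScalar, Dmat_eq_blockScalar,
    blockDiag_eq_blockScalar, blockScalar_transpose, ← map_mul, ← map_add, ← map_sub,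
    riccatiBlock_riccati]
  refine hasDerivAt_blockScalar_apply (hasDerivAt_riccatiBlock_apply ?_ ?_ ?_) i j
  · exact (hs₁.div (hs₀ t) ht).congr_deriv (by field_simp; linear_combination hW)
  · exact (hs₂.div (hs₀ t) ht).congr_deriv (by field_simp)
  · exact (hd₀.div (hs₀ t) ht).congr_deriv (by field_simp; ring)

lemma tendsto_div_pow_succ_of_hasDerivAt {f f' : ℝ → ℝ} {k : ℕ} {L : ℝ}
    (hf : ∀ t, HasDerivAt f (f' t) t) (h0 : f 0 = 0)
    (hL : Tendsto (fun t => f' t / t ^ k) (𝓝[>] 0) (𝓝 L)) :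
    Tendsto (fun t => f t / t ^ (k + 1)) (𝓝[>] 0) (𝓝 (L / (k + 1))) := by
  have hpow : ∀ t : ℝ, HasDerivAt (fun t => t ^ (k + 1)) ((k + 1) * t ^ k) t := fun t => by
    simpa using hasDerivAt_pow (k + 1) t
  refine HasDerivAt.lhopital_zero_right_on_Ioo one_pos (fun t _ => hf t) (fun t _ => hpow t)
    (fun t ht => by have := ht.1; positivity) ?_ ?_ ?_
  · simpa [h0] using (hf 0).continuousAt.tendsto.mono_left nhdsWithin_le_nhds
  · simpa using (hpow 0).continuousAt.tendsto.mono_left nhdsWithin_le_nhds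
  · exact (hL.div_const (k + 1)).congr fun t => by simp only [div_div, mul_comm]

lemma tendsto_pow_mul_div {f g : ℝ → ℝ} {k j : ℕ} {L M : ℝ} (hM : M ≠ 0)
    (hf : Tendsto (fun t => f t / t ^ k) (𝓝[>] 0) (𝓝 L))
    (hg : Tendsto (fun t => g t / t ^ (k + j)) (𝓝[>] 0) (𝓝 M)) :
    Tendsto (fun t => t ^ j * (f t / g t)) (𝓝[>] 0) (𝓝 (L / M)) := by
  refine (hf.div hg hM).congr' ?_
  filter_upwards [self_mem_nhdsWithin] with t (ht : 0 < t)
  rcases eq_or_ne (g t) 0 with hg0 | hg0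
  · simp [hg0]
  · simp only [Pi.div_apply]
    field_simp
    ring

lemma tendsto_div_of_pow_mul {f g : ℝ → ℝ} {m j : ℕ} {L M : ℝ} (hj : 0 < j) (hM : M ≠ 0)
    (hf : Tendsto (fun t => t ^ m * f t) (𝓝[>] 0) (𝓝 L))
    (hg : Tendsto (fun t => t ^ (m + j) * g t) (𝓝[>] 0) (𝓝 M)) :
    Tendsto (fun t => f t / g t) (𝓝[>] 0) (𝓝 0) := by
  have hpow : Tendsto (fun t : ℝ => t ^ j) (𝓝[>] 0) (𝓝 0) := by
    simpa [hj.ne'] using ((continuous_pow (M := ℝ) j).tendsto 0).mono_left nhdsWithin_le_nhds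
  refine (zero_mul (L / M) ▸ hpow.mul (hf.div hg hM)).congr' ?_
  filter_upwards [self_mem_nhdsWithin] with t (ht : 0 < t)
  simp only [Pi.div_apply]
  rw [← mul_div_assoc, pow_add, show t ^ j * (t ^ m * f t) = t ^ m * t ^ j * f t by ring,
    mul_div_mul_left _ _ (by positivity)]

lemma hasDerivAt_sinh_mul (a t : ℝ) : HasDerivAt (fun τ => sinh (a * τ)) (a * cosh (a * t)) t := by
  simpa [mul_comm] using ((hasDerivAt_id t).const_mul a).sinh

lemma hasDerivAt_cosh_mul (a t : ℝ) : HasDerivAt (fun τ => cosh (a * τ)) (a * sinh (a * t)) t := by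
  simpa [mul_comm] using ((hasDerivAt_id t).const_mul a).cosh

lemma tendsto_sinh_mul_div (a : ℝ) : Tendsto (fun t => sinh (a * t) / t) (𝓝[>] 0) (𝓝 a) := by
  have hL : Tendsto (fun t => a * cosh (a * t) / t ^ 0) (𝓝[>] 0) (𝓝 a) := by
    simpa using ((by fun_prop : Continuous fun t => a * cosh (a * t)).tendsto 0).mono_left
      nhdsWithin_le_nhds
  simpa using tendsto_div_pow_succ_of_hasDerivAt (hasDerivAt_sinh_mul a) (by simp) hL

section RiccatiBlockAsymptotics

variable {P Q R : ℝ → ℝ} {α β γ : ℝ}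

lemma tendsto_pow_four_mul_det (hP : Tendsto (fun t => t ^ 3 * P t) (𝓝[>] 0) (𝓝 α))
    (hQ : Tendsto (fun t => t ^ 2 * Q t) (𝓝[>] 0) (𝓝 β))
    (hR : Tendsto (fun t => t * R t) (𝓝[>] 0) (𝓝 γ)) :
    Tendsto (fun t => t ^ 4 * (P t * R t - Q t ^ 2)) (𝓝[>] 0) (𝓝 (α * γ - β ^ 2)) :=
  ((hP.mul hR).sub (hQ.pow 2)).congr fun t => by ring

lemma tendsto_riccatiBlock_inv_apply (hP : Tendsto (fun t => t ^ 3 * P t) (𝓝[>] 0) (𝓝 α))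
    (hQ : Tendsto (fun t => t ^ 2 * Q t) (𝓝[>] 0) (𝓝 β))
    (hR : Tendsto (fun t => t * R t) (𝓝[>] 0) (𝓝 γ)) (h : α * γ - β ^ 2 ≠ 0) (x y : Fin 2) :
    Tendsto (fun t => (riccatiBlock (P t) (Q t) (R t))⁻¹ x y) (𝓝[>] 0) (𝓝 0) := by
  have hdet := tendsto_pow_four_mul_det hP hQ hR
  have hR' : Tendsto (fun t => t ^ 1 * R t) (𝓝[>] 0) (𝓝 γ) := by simpa using hR
  have key : ∀ {F : ℝ → ℝ}, Tendsto (fun t => F t / (P t * R t - Q t ^ 2)) (𝓝[>] 0) (𝓝 0) →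
      Tendsto (fun t => -2 / (P t * R t - Q t ^ 2) * F t) (𝓝[>] 0) (𝓝 0) := fun hF => by
    simpa only [mul_zero] using (hF.const_mul (-2)).congr fun t => by ring
  fin_cases x <;> fin_cases y <;> simp only [riccatiBlock_inv, Matrix.smul_apply, smul_eq_mul] <;>
    refine key ?_
  · exact tendsto_div_of_pow_mul (m := 1) (j := 3) three_pos h hR' hdet
  · exact tendsto_div_of_pow_mul (m := 2) (j := 2) two_pos h hQ hdet
  · exact tendsto_div_of_pow_mul (m := 2) (j := 2) two_pos h hQ hdet
  · exact tendsto_div_of_pow_mul (m := 3) (j := 1) one_pos h hP hdet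

end RiccatiBlockAsymptotics

theorem tendsto_inv_harnackMatrix_apply_of_tendsto {n : ℕ} {s₀ s₁ s₂ : ℝ → ℝ} {c : ℝ}
    (hc : c ≠ 0) (h₁ : Tendsto (fun t => s₁ t / t) (𝓝[>] 0) (𝓝 c))
    (h₂ : Tendsto (fun t => s₂ t / t ^ 2) (𝓝[>] 0) (𝓝 (c / 2)))
    (h₀' : Tendsto (fun t => deriv s₀ t / t ^ 3) (𝓝[>] 0) (𝓝 (c / 3)))
    (h₀ : Tendsto (fun t => s₀ t / t ^ 4) (𝓝[>] 0) (𝓝 (c / 12))) (i j : Fin n ⊕ Fin n) :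
    Tendsto (fun t => (harnackMatrix n s₀ s₁ s₂ t)⁻¹ i j) (𝓝[>] 0) (𝓝 0) := by
  have hc₀ : c / 12 ≠ 0 := div_ne_zero hc (by norm_num)
  have hP := tendsto_pow_mul_div (k := 1) (j := 3) hc₀ (by simpa using h₁) h₀
  have hQ := tendsto_pow_mul_div (k := 2) (j := 2) hc₀ h₂ h₀
  have hR := tendsto_pow_mul_div (k := 3) (j := 1) hc₀ h₀' h₀
  simp only [pow_one] at hR
  have hdet : c / (c / 12) * (c / 3 / (c / 12)) - (c / 2 / (c / 12)) ^ 2 ≠ 0 := by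
    field_simp; norm_num
  have hinv : ∀ᶠ t in 𝓝[>] 0, (harnackMatrix n s₀ s₁ s₂ t)⁻¹
      = blockScalar (Fin n) (riccatiBlock (s₁ t / s₀ t) (s₂ t / s₀ t) (deriv s₀ t / s₀ t))⁻¹ := by
    filter_upwards [(tendsto_pow_four_mul_det hP hQ hR).eventually_ne hdet] with t ht
    rw [harnackMatrix_eq_blockScalar, blockScalar_inv]
    rw [det_riccatiBlock, isUnit_iff_ne_zero]
    exact div_ne_zero (right_ne_zero_of_mul ht) four_ne_zero
  exact (tendsto_blockScalar_apply (tendsto_riccatiBlock_inv_apply hP hQ hR hdet) i j).congr'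
    (hinv.mono fun t ht => (congrFun (congrFun ht i) j).symm)

namespace Riccati

variable (a b : ℝ)

-- `s0A k₁ k₂`, `s1A k₁ k₂`, `s2A k₁ k₂` are `s₀`, `s₁`, `s₂` at `a = λ₁`, `b = λ₂`, definitionally.
def s₀ (t : ℝ) : ℝ :=
  (a ^ 2 + b ^ 2) * sinh (a * t) * sinh (b * t) + 2 * a * b * (1 - cosh (a * t) * cosh (b * t))

def s₀' (t : ℝ) : ℝ :=
  (a ^ 2 + b ^ 2) * (a * cosh (a * t) * sinh (b * t) + b * sinh (a * t) * cosh (b * t))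
    - 2 * a * b * (a * sinh (a * t) * cosh (b * t) + b * cosh (a * t) * sinh (b * t))

def s₁ (t : ℝ) : ℝ :=
  a * b * (a ^ 2 - b ^ 2) * (a * sinh (a * t) * cosh (b * t) - b * cosh (a * t) * sinh (b * t))

def s₂ (t : ℝ) : ℝ :=
  a * b * ((a ^ 2 + b ^ 2) * (cosh (a * t) * cosh (b * t) - 1)
    - 2 * a * b * sinh (a * t) * sinh (b * t))

lemma hasDerivAt_s₀ (t : ℝ) : HasDerivAt (s₀ a b) (s₀' a b t) t := by
  have sa := hasDerivAt_sinh_mul a t; have sb := hasDerivAt_sinh_mul b t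
  have ca := hasDerivAt_cosh_mul a t; have cb := hasDerivAt_cosh_mul b t
  exact (((sa.const_mul (a ^ 2 + b ^ 2)).mul sb).add
    (((ca.mul cb).const_sub 1).const_mul (2 * a * b))).congr_deriv (by simp only [s₀']; ring)

lemma hasDerivAt_s₀' (t : ℝ) :
    HasDerivAt (s₀' a b) ((a ^ 2 - b ^ 2) ^ 2 * sinh (a * t) * sinh (b * t)) t := by
  have sa := hasDerivAt_sinh_mul a t; have sb := hasDerivAt_sinh_mul b t
  have ca := hasDerivAt_cosh_mul a t; have cb := hasDerivAt_cosh_mul b t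
  exact (((((ca.const_mul a).mul sb).add ((sa.const_mul b).mul cb)).const_mul (a ^ 2 + b ^ 2)).sub
    ((((sa.const_mul a).mul cb).add ((ca.const_mul b).mul sb)).const_mul (2 * a * b))).congr_deriv
    (by ring)

lemma hasDerivAt_s₁ (t : ℝ) :
    HasDerivAt (s₁ a b) (a * b * (a ^ 2 - b ^ 2) ^ 2 * cosh (a * t) * cosh (b * t)) t := by
  have sa := hasDerivAt_sinh_mul a t; have sb := hasDerivAt_sinh_mul b t
  have ca := hasDerivAt_cosh_mul a t; have cb := hasDerivAt_cosh_mul b t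
  exact ((((sa.const_mul a).mul cb).sub ((ca.const_mul b).mul sb)).const_mul
    (a * b * (a ^ 2 - b ^ 2))).congr_deriv (by ring)

lemma hasDerivAt_s₂ (t : ℝ) : HasDerivAt (s₂ a b) (s₁ a b t) t := by
  have sa := hasDerivAt_sinh_mul a t; have sb := hasDerivAt_sinh_mul b t
  have ca := hasDerivAt_cosh_mul a t; have cb := hasDerivAt_cosh_mul b t
  exact (((((ca.mul cb).sub_const 1).const_mul (a ^ 2 + b ^ 2)).sub
    ((sa.const_mul (2 * a * b)).mul sb)).const_mul (a * b)).congr_deriv (by simp only [s₁]; ring)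

lemma s₀''_eq (t : ℝ) : (a ^ 2 - b ^ 2) ^ 2 * sinh (a * t) * sinh (b * t)
    = 2 * s₂ a b t + (a ^ 2 + b ^ 2) * s₀ a b t := by
  simp only [s₂, s₀]; ring

lemma wronskian_s₀_s₁ (t : ℝ) :
    a * b * (a ^ 2 - b ^ 2) ^ 2 * cosh (a * t) * cosh (b * t) * s₀ a b t - s₁ a b t * s₀' a b t
      = a ^ 2 * b ^ 2 * s₀ a b t ^ 2 - s₂ a b t ^ 2 := by
  have ha := cosh_sq_sub_sinh_sq (a * t); have hb := cosh_sq_sub_sinh_sq (b * t)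
  simp only [s₀, s₀', s₁, s₂]
  linear_combination
    (-(a * b * (a ^ 2 - b ^ 2)) ^ 2) * ((cosh (b * t) ^ 2 - sinh (b * t) ^ 2) * ha + hb)

variable {a b} in
lemma s₀_eq_zero (h : a * b * (a ^ 2 - b ^ 2) = 0) (t : ℝ) : s₀ a b t = 0 := by
  have hb := cosh_sq_sub_sinh_sq (b * t)
  rcases mul_eq_zero.1 h with hab | hsq
  · rcases mul_eq_zero.1 hab with rfl | rfl <;> simp [s₀]
  · rcases sq_eq_sq_iff_eq_or_eq_neg.1 (sub_eq_zero.1 hsq) with hab | hab <;> subst a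
    · simp only [s₀]; linear_combination (-2 * b ^ 2) * hb
    · simp only [s₀, neg_mul, sinh_neg, cosh_neg]; linear_combination (2 * b ^ 2) * hb

lemma tendsto_s₁_div :
    Tendsto (fun t => s₁ a b t / t) (𝓝[>] 0) (𝓝 (a * b * (a ^ 2 - b ^ 2) ^ 2)) := by
  have hL : Tendsto (fun t => a * b * (a ^ 2 - b ^ 2) ^ 2 * cosh (a * t) * cosh (b * t) / t ^ 0)
      (𝓝[>] 0) (𝓝 (a * b * (a ^ 2 - b ^ 2) ^ 2)) := by
    simpa using ((by fun_prop : Continuous fun t => a * b * (a ^ 2 - b ^ 2) ^ 2 * cosh (a * t) *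
      cosh (b * t)).tendsto 0).mono_left nhdsWithin_le_nhds
  simpa using tendsto_div_pow_succ_of_hasDerivAt (hasDerivAt_s₁ a b) (by simp [s₁]) hL

lemma tendsto_s₂_div :
    Tendsto (fun t => s₂ a b t / t ^ 2) (𝓝[>] 0) (𝓝 (a * b * (a ^ 2 - b ^ 2) ^ 2 / 2)) := by
  convert tendsto_div_pow_succ_of_hasDerivAt (k := 1) (hasDerivAt_s₂ a b) (by simp [s₂])
    (by simpa using tendsto_s₁_div a b) using 2
  norm_num

lemma tendsto_s₀'_div :
    Tendsto (fun t => s₀' a b t / t ^ 3) (𝓝[>] 0) (𝓝 (a * b * (a ^ 2 - b ^ 2) ^ 2 / 3)) := by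
  have hL :=
    ((tendsto_sinh_mul_div a).mul (tendsto_sinh_mul_div b)).const_mul ((a ^ 2 - b ^ 2) ^ 2)
  convert tendsto_div_pow_succ_of_hasDerivAt (k := 2) (hasDerivAt_s₀' a b) (by simp [s₀'])
    (hL.congr fun t => by ring) using 2
  norm_num; ring

lemma tendsto_s₀_div :
    Tendsto (fun t => s₀ a b t / t ^ 4) (𝓝[>] 0) (𝓝 (a * b * (a ^ 2 - b ^ 2) ^ 2 / 12)) := by
  convert tendsto_div_pow_succ_of_hasDerivAt (k := 3) (hasDerivAt_s₀ a b) (by simp [s₀])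
    (tendsto_s₀'_div a b) using 2
  norm_num; ring

theorem tendsto_inv_harnackMatrix_apply (n : ℕ) (a b : ℝ) (i j : Fin n ⊕ Fin n) :
    Tendsto (fun t => (harnackMatrix n (s₀ a b) (s₁ a b) (s₂ a b) t)⁻¹ i j) (𝓝[>] 0) (𝓝 0) := by
  by_cases hc : a * b * (a ^ 2 - b ^ 2) = 0
  · have h0 : riccatiBlock 0 0 0 = 0 := by
      ext x y; fin_cases x <;> fin_cases y <;> simp [riccatiBlock]
    have hS : ∀ t, harnackMatrix n (s₀ a b) (s₁ a b) (s₂ a b) t = 0 := fun t => by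
      simp [harnackMatrix_eq_blockScalar, s₀_eq_zero hc, h0]
    simp [hS]
  have hd : deriv (s₀ a b) = s₀' a b := funext fun t => (hasDerivAt_s₀ a b t).deriv
  refine tendsto_inv_harnackMatrix_apply_of_tendsto ?_ (tendsto_s₁_div a b)
    (tendsto_s₂_div a b) (hd ▸ tendsto_s₀'_div a b) (tendsto_s₀_div a b) i j
  rw [sq, ← mul_assoc]
  exact mul_ne_zero hc (right_ne_zero_of_mul hc)

end Riccati

section Lambda

variable {k₁ k₂ : ℝ}

lemma lam2_eq_zero (hk₂ : k₂ ≤ 0) : lam2 k₁ k₂ = 0 :=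
  Real.sqrt_eq_zero'.2 (by linarith [Real.sqrt_nonneg (k₂ ^ 2 - 2 * k₁)])

lemma sqrt_sq_sub_two_mul_le (hk₁ : 0 ≤ k₁) (hk₂ : 0 ≤ k₂) : √(k₂ ^ 2 - 2 * k₁) ≤ k₂ :=
  Real.sqrt_le_iff.2 ⟨hk₂, by linarith⟩

lemma lam1_sq_add_lam2_sq (hk₁ : 0 ≤ k₁) (hk₂ : 0 ≤ k₂) :
    lam1 k₁ k₂ ^ 2 + lam2 k₁ k₂ ^ 2 = 2 * k₂ := by
  rw [lam1, lam2, Real.sq_sqrt (by positivity),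
    Real.sq_sqrt (by linarith [sqrt_sq_sub_two_mul_le hk₁ hk₂])]
  ring

lemma lam1_sq_mul_lam2_sq (hk₁ : 0 ≤ k₁) (hk₂ : 0 ≤ k₂) (h : 2 * k₁ ≤ k₂ ^ 2) :
    lam1 k₁ k₂ ^ 2 * lam2 k₁ k₂ ^ 2 = 2 * k₁ := by
  rw [lam1, lam2, Real.sq_sqrt (by positivity),
    Real.sq_sqrt (by linarith [sqrt_sq_sub_two_mul_le hk₁ hk₂])]
  linear_combination -Real.sq_sqrt (sub_nonneg.2 h)

end Lambda

theorem riccati_explicit_case1_general (n : ℕ)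
    (k₁ k₂ : ℝ) (hk₁ : 0 < 2 * k₁) (hk₂ : 2 * k₁ < k₂ ^ 2) :
    (∀ a b : ℝ, 0 ≤ a → (∀ r ∈ Ioo a b, s0A k₁ k₂ r ≠ 0) → ∀ t ∈ Ioo a b,
      ∀ i j, HasDerivAt (fun τ => harnackMatrix n (s0A k₁ k₂) (s1A k₁ k₂) (s2A k₁ k₂) τ i j)
        ((harnackMatrix n (s0A k₁ k₂) (s1A k₁ k₂) (s2A k₁ k₂) t * Cmat n
          + (Cmat n)ᵀ * harnackMatrix n (s0A k₁ k₂) (s1A k₁ k₂) (s2A k₁ k₂) t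
          + harnackMatrix n (s0A k₁ k₂) (s1A k₁ k₂) (s2A k₁ k₂) t * Dmat n *
              harnackMatrix n (s0A k₁ k₂) (s1A k₁ k₂) (s2A k₁ k₂) t
          - blockDiag n k₁ k₂) i j) t) ∧
    (∀ i j, Tendsto (fun t => (harnackMatrix n (s0A k₁ k₂) (s1A k₁ k₂) (s2A k₁ k₂) t)⁻¹ i j)
      (nhdsWithin 0 (Ioi 0)) (nhds 0)) := by
  refine ⟨fun _ _ _ hs t ht i j => ?_, Riccati.tendsto_inv_harnackMatrix_apply n _ _⟩
  obtain hk₂₀ | hk₂₀ := le_or_gt k₂ 0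
  · exact absurd (Riccati.s₀_eq_zero (by rw [lam2_eq_zero hk₂₀]; ring) t) (hs t ht)
  have hsum := lam1_sq_add_lam2_sq (k₁ := k₁) (by linarith) hk₂₀.le
  have hprod := lam1_sq_mul_lam2_sq (by linarith) hk₂₀.le hk₂.le
  exact hasDerivAt_harnackMatrix_apply (Riccati.hasDerivAt_s₀ _ _)
    ((Riccati.hasDerivAt_s₀' _ _ t).congr_deriv (by rw [Riccati.s₀''_eq, hsum]))
    (Riccati.hasDerivAt_s₁ _ _ t) (Riccati.hasDerivAt_s₂ _ _ t)
    (by rw [Riccati.wronskian_s₀_s₁, hprod]) (hs t ht) i j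

/-- **Explicit solution of the Riccati equation, case `k₂² > 2k₁ > 0`** (Lemma 3.3 (1)):
`S(t) = ½[[-(s₁/s₀)I, (s₂/s₀)I], [(s₂/s₀)I, -(s₀'/s₀)I]]` solves
`S' = SC + CᵀS + SDS − K` with `K = [[k₁I, 0], [0, k₂I]]` on every interval of `(0, ∞)` where
`s₀` does not vanish, and `S(t)⁻¹ → 0` as `t → 0⁺`. -/
theorem riccati_explicit_case1 (n : ℕ) (hn : 1 ≤ n)
    (k₁ k₂ : ℝ) (hk₁ : 0 < 2 * k₁) (hk₂ : 2 * k₁ < k₂ ^ 2) :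
    (∀ a b : ℝ, 0 ≤ a → (∀ r ∈ Ioo a b, s0A k₁ k₂ r ≠ 0) → ∀ t ∈ Ioo a b,
      ∀ i j, HasDerivAt (fun τ => harnackMatrix n (s0A k₁ k₂) (s1A k₁ k₂) (s2A k₁ k₂) τ i j)
        ((harnackMatrix n (s0A k₁ k₂) (s1A k₁ k₂) (s2A k₁ k₂) t * Cmat n
          + (Cmat n)ᵀ * harnackMatrix n (s0A k₁ k₂) (s1A k₁ k₂) (s2A k₁ k₂) t
          + harnackMatrix n (s0A k₁ k₂) (s1A k₁ k₂) (s2A k₁ k₂) t * Dmat n *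
              harnackMatrix n (s0A k₁ k₂) (s1A k₁ k₂) (s2A k₁ k₂) t
          - blockDiag n k₁ k₂) i j) t) ∧
    (∀ i j, Tendsto (fun t => (harnackMatrix n (s0A k₁ k₂) (s1A k₁ k₂) (s2A k₁ k₂) t)⁻¹ i j)
      (nhdsWithin 0 (Ioi 0)) (nhds 0)) :=
  riccati_explicit_case1_general n k₁ k₂ hk₁ hk₂
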